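/- Given matrices A₂₁ ∈ ℂ^{m×n}, random sketch matrices R₁ ∈ ℂ^{n×r}, R₂ ∈ ℂ^{m×r}, and matrices U₁ with orthonormal columns spanning the column space of A₂₁ (so A₂₁ = U₁ U₁* A₂₁) and U₂ with orthonormal columns spanning the column space of A₂₁* (so A₂₁* = U₂ U₂* A₂₁*), if R₂* U₁ and U₂* R₁ have full column rank, then U₁ (R₂* U₁)⁺ (R₂* A₂₁ R₁) (U₂* R₁)⁺ U₂* = A₂₁, where ⁺ denotes the Moore–Penrose pseudoinverse. -/
import Mathlib


open Matrix

/-- `P` is the Moore–Penrose pseudoinverse of `M` (the four Penrose conditions). -/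
def IsMoorePenroseInverse {m n : ℕ} (M : Matrix (Fin m) (Fin n) ℂ)
    (P : Matrix (Fin n) (Fin m) ℂ) : Prop :=
  M * P * M = M ∧ P * M * P = P ∧ (M * P)ᴴ = M * P ∧ (P * M)ᴴ = P * M

lemma isUnit_of_rank_eq_card {k : ℕ} (M : Matrix (Fin k) (Fin k) ℂ) (h : M.rank = k) :
    IsUnit M := by
  rw [← Matrix.mulVec_surjective_iff_isUnit]
  have hr : LinearMap.range M.mulVecLin = ⊤ := by
    apply Submodule.eq_top_of_finrank_eq
    rw [Module.finrank_fintype_fun_eq_card, Fintype.card_fin]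
    exact h
  intro v
  obtain ⟨w, hw⟩ := LinearMap.range_eq_top.mp hr v
  exact ⟨w, hw⟩

/-- Exactness of the randomized low-rank reconstruction in the peeling algorithm:
if `A₂₁ = U₁U₁*A₂₁` and `A₂₁* = U₂U₂*A₂₁*` with `U₁, U₂` having orthonormal columns, and
`R₂*U₁` and `U₂*R₁` have full column rank, then
`U₁ (R₂*U₁)⁺ (R₂* A₂₁ R₁) (U₂*R₁)⁺ U₂* = A₂₁`. -/
theorem randomized_low_rank_reconstruction
    {m n r k : ℕ}
    (A₂₁ : Matrix (Fin m) (Fin n) ℂ)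
    (R₁ : Matrix (Fin n) (Fin r) ℂ) (R₂ : Matrix (Fin m) (Fin r) ℂ)
    (U₁ : Matrix (Fin m) (Fin k) ℂ) (U₂ : Matrix (Fin n) (Fin k) ℂ)
    (hU₁ : U₁ᴴ * U₁ = 1) (hU₂ : U₂ᴴ * U₂ = 1)
    (hcol : A₂₁ = U₁ * U₁ᴴ * A₂₁) (hrow : A₂₁ᴴ = U₂ * U₂ᴴ * A₂₁ᴴ)
    (P₁ : Matrix (Fin k) (Fin r) ℂ) (P₂ : Matrix (Fin r) (Fin k) ℂ)
    (hP₁ : IsMoorePenroseInverse (R₂ᴴ * U₁) P₁)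
    (hP₂ : IsMoorePenroseInverse (U₂ᴴ * R₁) P₂)
    (hrank₁ : (R₂ᴴ * U₁).rank = k) (hrank₂ : (U₂ᴴ * R₁).rank = r) :
    U₁ * P₁ * (R₂ᴴ * A₂₁ * R₁) * P₂ * U₂ᴴ = A₂₁ := by
  -- First deduce k = r from the two rank conditions.
  have hkr : r = k := by
    have h1 : r ≤ k := by simpa [hrank₂] using (U₂ᴴ * R₁).rank_le_height
    have h2 : k ≤ r := by simpa [hrank₁] using (R₂ᴴ * U₁).rank_le_height
    exact le_antisymm h1 h2
  subst hkr
  -- Both sketched matrices are square of full rank, hence invertible.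
  have u₁ : IsUnit (R₂ᴴ * U₁) := isUnit_of_rank_eq_card _ hrank₁
  have u₂ : IsUnit (U₂ᴴ * R₁) := isUnit_of_rank_eq_card _ hrank₂
  have i₁ := u₁.invertible
  have i₂ := u₂.invertible
  -- Left/right inverses from the Penrose conditions.
  have l₁ : P₁ * (R₂ᴴ * U₁) = 1 := by
    apply Matrix.mul_right_injective_of_invertible (R₂ᴴ * U₁)
    show (R₂ᴴ * U₁) * (P₁ * (R₂ᴴ * U₁)) = (R₂ᴴ * U₁) * 1
    rw [mul_one, ← mul_assoc]
    exact hP₁.1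
  have r₂ : (U₂ᴴ * R₁) * P₂ = 1 := by
    apply Matrix.mul_left_injective_of_invertible (U₂ᴴ * R₁)
    show ((U₂ᴴ * R₁) * P₂) * (U₂ᴴ * R₁) = 1 * (U₂ᴴ * R₁)
    rw [one_mul]
    exact hP₂.1
  -- A₂₁ = A₂₁ * U₂ * U₂ᴴ
  have hrow' : A₂₁ = A₂₁ * (U₂ * U₂ᴴ) := by
    have := congrArg conjTranspose hrow
    simpa [conjTranspose_mul, mul_assoc] using this
  calc U₁ * P₁ * (R₂ᴴ * A₂₁ * R₁) * P₂ * U₂ᴴ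
      = U₁ * (P₁ * (R₂ᴴ * U₁)) * (U₁ᴴ * A₂₁ * U₂) * ((U₂ᴴ * R₁) * P₂) * U₂ᴴ := by
        conv_lhs => rw [hcol]
        conv_lhs => rw [hrow', ← Matrix.mul_assoc]
        simp only [Matrix.mul_assoc]
    _ = U₁ * (U₁ᴴ * A₂₁ * U₂) * U₂ᴴ := by rw [l₁, r₂, Matrix.mul_one, Matrix.mul_one]
    _ = A₂₁ := by
        rw [show U₁ * (U₁ᴴ * A₂₁ * U₂) * U₂ᴴ = (U₁ * U₁ᴴ * A₂₁) * U₂ * U₂ᴴ by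
          simp only [Matrix.mul_assoc], ← hcol]
        rw [Matrix.mul_assoc, ← hrow']
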